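/- arXiv:2006.14048 — 7 statements merged into one kernel-verified Lean document; each statement's English description precedes it below -/
import Mathlib

section
/- If H is a finitely presented group that embeds into an ultrapower of a group G, then H is fully residually G: for every finite set of nontrivial elements h₁,...,hₚ of H, there is a homomorphism f: H → G with f(hᵢ) ≠ e for all i. -/
/-!
Write `H` as `⟨α | R⟩` with `R` finite and let `φ : H → G^I/𝒰` be the embedding. Lifting the images
of the generators to sequences in `G^I` gives, for every index `i`, an assignment of the
generators in `G`; each of the finitely many relators holds at `𝒰`-almost every `i`, so almost
every coordinate is a homomorphism `fᵢ : H →* G` and `φ` is the germ of the family `(fᵢ)`. Since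
`φ (hⱼ) ≠ 1` and `𝒰` is an ultrafilter, `fᵢ (hⱼ) ≠ 1` for almost every `i`, and a single `i`
works for all finitely many `j`.
-/

open Filter

theorem FreeGroup.exists_forall_germ_eq_lift {α I G : Type*} [Group G] {l : Filter I}
    (ψ : FreeGroup α →* Germ l G) :
    ∃ x : α → I → G, ∀ w, ψ w = ↑(fun i => FreeGroup.lift (fun a => x a i) w) := by
  choose x hx using fun a => Quot.exists_rep (ψ (FreeGroup.of a))
  have hψ : ψ = (Germ.coeMulHom l).comp (MonoidHom.pi fun i => FreeGroup.lift fun a => x a i) := by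
    ext a
    rw [← hx a]
    exact Germ.coe_eq.2 (.of_eq (funext fun i => (FreeGroup.lift_apply_of ..).symm))
  exact ⟨x, fun w => DFunLike.congr_fun hψ w⟩

theorem PresentedGroup.exists_forall_germ_eq {α I G : Type*} [Group G] {l : Filter I}
    {rels : Set (FreeGroup α)} (hrels : rels.Finite) (ψ : PresentedGroup rels →* Germ l G) :
    ∃ f : I → PresentedGroup rels →* G, ∀ g, ψ g = ↑(fun i => f i g) := by
  classical
  obtain ⟨x, hx⟩ := FreeGroup.exists_forall_germ_eq_lift (ψ.comp (PresentedGroup.mk rels))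
  have hrel : ∀ᶠ i in l, ∀ r ∈ rels, FreeGroup.lift (fun a => x a i) r = 1 :=
    (eventually_all_finite hrels).2 fun r hr => Germ.coe_eq.1 <| by
      rw [← hx, MonoidHom.comp_apply, PresentedGroup.one_of_mem hr, map_one]
      rfl
  -- off the `l`-large set of indices where the relators hold, any homomorphism will do
  refine ⟨fun i => if h : ∀ r ∈ rels, FreeGroup.lift (fun a => x a i) r = 1 then
    PresentedGroup.toGroup h else 1, fun g => ?_⟩
  obtain ⟨w, rfl⟩ := PresentedGroup.mk_surjective rels g
  rw [← MonoidHom.comp_apply, hx]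
  refine Germ.coe_eq.2 (hrel.mono fun i hi => ?_)
  simp only [dif_pos hi]
  rfl

/-- If a finitely presented group `H` embeds into an ultrapower of a group `G`,
then `H` is fully residually `G`: any finite set of nontrivial elements of `H`
is separated from the identity by a single homomorphism `H →* G`. -/
theorem stmt3 {G H : Type*} [Group G] [Group H]
    (m k : ℕ) (rels : Fin k → FreeGroup (Fin m))
    (e : H ≃* PresentedGroup (Set.range rels))
    {I : Type*} (𝒰 : Ultrafilter I)
    (φ : H →* Filter.Germ (𝒰 : Filter I) G) (hφ : Function.Injective φ)
    (p : ℕ) (h : Fin p → H) (hh : ∀ j, h j ≠ 1) :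
    ∃ f : H →* G, ∀ j, f (h j) ≠ 1 := by
  obtain ⟨f, hf⟩ := PresentedGroup.exists_forall_germ_eq (Set.finite_range rels)
    (φ.comp e.symm.toMonoidHom)
  have hne : ∀ j, ∀ᶠ i in (𝒰 : Filter I), f i (e (h j)) ≠ 1 := fun j => by
    have hφh : (φ.comp e.symm.toMonoidHom) (e (h j)) ≠ 1 := by
      simpa [map_ne_one_iff φ hφ] using hh j
    rw [hf, ← Germ.coe_one, Ne, Germ.coe_eq] at hφh
    exact Ultrafilter.eventually_not.2 hφh
  obtain ⟨i, hi⟩ := (eventually_all.2 hne).exists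
  exact ⟨(f i).comp e.toMonoidHom, hi⟩
end

section
/- A group G is left-orderable if and only if for every finite subset {g₁,...,gₙ} of G \ {e} and every m ∈ ℕ, there exists a sign vector (ε₁,...,εₙ) ∈ {1,-1}ⁿ such that the identity e is not equal to any product of at most m elements from {g₁^{ε₁},...,gₙ^{εₙ}}. -/
/-- A group is left-orderable if it admits a left-invariant strict total order. -/
def LeftOrderable (G : Type*) [Group G] : Prop :=
  ∃ lt : G → G → Prop, IsStrictTotalOrder G lt ∧
    ∀ f g h : G, lt f g → lt (h * f) (h * g)

/-!
A left order is the same thing as a positive cone: a subsemigroup `P` with `1 ∉ P` and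
`g ∈ P ∨ g⁻¹ ∈ P` for every `g ≠ 1`. Given an order, signing every `gᵢ` positively puts all
the signed elements, hence all their products, into the cone. Conversely, since there are only
finitely many sign vectors, a sign vector that works up to every length works for all lengths.
Rado's selection principle (compactness of `Bool ^ (G ∖ {1})`) glues the sign vectors of the
finite subsets of `G ∖ {1}` into one global choice of signs, and the subsemigroup generated by
the signed elements is a positive cone.
-/

theorem Finite.exists_forall_of_forall_exists_bounded {ι α : Type*} [Finite ι]
    (size : α → ℕ) (Q : ι → α → Prop) (h : ∀ m, ∃ i, ∀ a, size a ≤ m → Q i a) :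
    ∃ i, ∀ a, Q i a := by
  by_contra! hbad
  choose a ha using hbad
  obtain ⟨m, hm⟩ := Finite.exists_le (fun i => size (a i))
  obtain ⟨i, hi⟩ := h m
  exact ha i (hi (a i) (hm i))

namespace Subsemigroup

variable {M : Type*} [Monoid M]

theorem list_prod_mem {S : Subsemigroup M} {l : List M} (hl : l ≠ []) (h : ∀ x ∈ l, x ∈ S) :
    l.prod ∈ S := by
  induction l with
  | nil => exact absurd rfl hl
  | cons x t ih =>
    rw [List.forall_mem_cons] at h
    rcases eq_or_ne t [] with rfl | ht
    · simpa using h.1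
    · exact S.mul_mem h.1 (ih ht h.2)

theorem mem_closure_iff_exists_list {s : Set M} {x : M} :
    x ∈ closure s ↔ ∃ l : List M, l ≠ [] ∧ (∀ y ∈ l, y ∈ s) ∧ l.prod = x := by
  constructor
  · intro hx
    induction hx using closure_induction with
    | mem x hx => exact ⟨[x], by simp, by simpa using hx, by simp⟩
    | mul x y _ _ hx hy =>
      obtain ⟨l₁, hl₁, hs₁, rfl⟩ := hx
      obtain ⟨l₂, -, hs₂, rfl⟩ := hy
      exact ⟨l₁ ++ l₂, by simp [hl₁], fun y hy => (List.mem_append.mp hy).elim (hs₁ y) (hs₂ y),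
        List.prod_append⟩
  · rintro ⟨l, hl, hs, rfl⟩
    exact list_prod_mem hl fun y hy => subset_closure (hs y hy)

end Subsemigroup

open Subsemigroup

section Cone

variable {G : Type*} [Group G]

theorem LeftOrderable.exists_positiveCone (h : LeftOrderable G) :
    ∃ P : Subsemigroup G, (1 : G) ∉ P ∧ ∀ g : G, g ≠ 1 → g ∈ P ∨ g⁻¹ ∈ P := by
  obtain ⟨lt, hlt, hinv⟩ := h
  refine ⟨⟨{g | lt 1 g}, fun {a b} ha hb => ?_⟩, irrefl_of lt 1, fun g hg => ?_⟩
  · have hab : lt a (a * b) := by simpa using hinv 1 b a hb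
    exact _root_.trans ha hab
  · rcases trichotomous_of lt 1 g with h1 | h1 | h1
    · exact Or.inl h1
    · exact absurd h1.symm hg
    · right
      simpa using hinv g 1 g⁻¹ h1

theorem leftOrderable_of_positiveCone (P : Subsemigroup G) (hP : (1 : G) ∉ P)
    (htotal : ∀ g : G, g ≠ 1 → g ∈ P ∨ g⁻¹ ∈ P) : LeftOrderable G := by
  refine ⟨fun a b => a⁻¹ * b ∈ P, ?_, fun a b c h => by simpa [mul_assoc] using h⟩
  have trichotomous (a b : G) : a⁻¹ * b ∉ P → b⁻¹ * a ∉ P → a = b := by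
    intro hab hba
    by_contra hne
    refine (htotal (a⁻¹ * b) (by simpa [inv_mul_eq_one] using hne)).elim hab ?_
    simpa using hba
  exact { trichotomous,
          irrefl := fun a => by simpa using hP,
          trans := fun a b c hab hbc => by simpa [mul_assoc] using P.mul_mem hab hbc }

end Cone

section Signs

variable {G : Type*} [Group G] {ι : Type*}

def signed (ε : ι → Bool) (g : ι → G) (i : ι) : G :=
  if ε i then g i else (g i)⁻¹

def AdmitsSigns (g : ι → G) : Prop :=
  ∃ ε : ι → Bool, (1 : G) ∉ closure (Set.range (signed ε g))

theorem LeftOrderable.admitsSigns (h : LeftOrderable G) {g : ι → G} (hg : ∀ i, g i ≠ 1) :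
    AdmitsSigns g := by
  classical
  obtain ⟨P, hP, htotal⟩ := h.exists_positiveCone
  refine ⟨fun i => decide (g i ∈ P), fun h1 => hP (closure_le.mpr ?_ h1)⟩
  rintro _ ⟨i, rfl⟩
  by_cases hi : g i ∈ P
  · simp [signed, hi]
  · simpa [signed, hi] using (htotal _ (hg i)).resolve_left hi

theorem admitsSigns_of_forall_length [Finite ι] {g : ι → G}
    (h : ∀ m, ∃ ε : ι → Bool, ∀ l : List G, l ≠ [] → l.length ≤ m →
      (∀ x ∈ l, ∃ i, x = signed ε g i) → l.prod ≠ 1) : AdmitsSigns g := by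
  obtain ⟨ε, hε⟩ := Finite.exists_forall_of_forall_exists_bounded List.length
    (fun ε l => l ≠ [] → (∀ x ∈ l, ∃ i, x = signed ε g i) → l.prod ≠ 1)
    (fun m => (h m).imp fun ε hε l hm hl => hε l hl hm)
  refine ⟨ε, fun h1 => ?_⟩
  obtain ⟨l, hl, hs, hprod⟩ := mem_closure_iff_exists_list.mp h1
  exact hε l hl (fun x hx => (hs x hx).imp fun i hi => hi.symm) hprod

theorem AdmitsSigns.of_comp_equiv {κ : Type*} {g : ι → G} (e : κ ≃ ι)
    (h : AdmitsSigns (g ∘ e)) : AdmitsSigns g := by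
  obtain ⟨ε, hε⟩ := h
  refine ⟨ε ∘ e.symm, ?_⟩
  have hcomp : signed (ε ∘ e.symm) g ∘ e = signed ε (g ∘ e) := by
    ext k
    simp [signed]
  rwa [← hcomp, e.surjective.range_comp] at hε

theorem admitsSigns_of_forall_finset {g : ι → G}
    (h : ∀ s : Finset ι, AdmitsSigns fun i : s => g i) : AdmitsSigns g := by
  classical
  choose ε hε using h
  obtain ⟨χ, hχ⟩ := Finset.rado_selection_subtype (β := fun _ => Bool) ε
  refine ⟨χ, fun h1 => ?_⟩
  obtain ⟨l, hl, hs, hprod⟩ := mem_closure_iff_exists_list.mp h1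
  choose i hi using fun y hy => Set.mem_range.mp (hs y hy)
  obtain ⟨t, hst, hagree⟩ := hχ (l.attach.map fun y : {y // y ∈ l} => i y.1 y.2).toFinset
  refine hε t (mem_closure_iff_exists_list.mpr ⟨l, hl, fun y hy => ?_, hprod⟩)
  have hmem : i y hy ∈ (l.attach.map fun y : {y // y ∈ l} => i y.1 y.2).toFinset := by
    simpa using ⟨y, hy, rfl⟩
  refine ⟨Set.inclusion hst ⟨i y hy, hmem⟩, ?_⟩
  simpa [signed, ← hagree] using hi y hy

theorem leftOrderable_of_admitsSigns (h : AdmitsSigns (Subtype.val : {g : G // g ≠ 1} → G)) :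
    LeftOrderable G := by
  obtain ⟨ε, hε⟩ := h
  refine leftOrderable_of_positiveCone _ hε fun g hg => ?_
  have hmem : signed ε Subtype.val ⟨g, hg⟩ ∈ closure (Set.range (signed ε Subtype.val)) :=
    subset_closure ⟨_, rfl⟩
  by_cases hs : ε ⟨g, hg⟩
  · exact Or.inl (by simpa [signed, hs] using hmem)
  · exact Or.inr (by simpa [signed, hs] using hmem)

end Signs

/-- `G` is left-orderable iff for every finite family `g₁, …, gₙ` of nontrivial
elements and every `m`, there is a choice of signs `ε` such that the identity
is not a product of at most `m` elements from `{g₁^{ε₁}, …, gₙ^{εₙ}}`. -/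
theorem stmt4 {G : Type*} [Group G] :
    LeftOrderable G ↔
      ∀ (n : ℕ) (g : Fin n → G), (∀ i, g i ≠ 1) → ∀ m : ℕ,
        ∃ ε : Fin n → Bool, ∀ l : List G, l ≠ [] → l.length ≤ m →
          (∀ x ∈ l, ∃ i, x = (if ε i then g i else (g i)⁻¹)) → l.prod ≠ 1 := by
  constructor
  · intro hG n g hg m
    obtain ⟨ε, hε⟩ := hG.admitsSigns hg
    refine ⟨ε, fun l hl _ hs hprod => hε ?_⟩
    exact mem_closure_iff_exists_list.mpr
      ⟨l, hl, fun x hx => (hs x hx).imp fun i hi => hi.symm, hprod⟩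
  · intro H
    refine leftOrderable_of_admitsSigns (admitsSigns_of_forall_finset fun s => ?_)
    let e := s.equivFin
    exact AdmitsSigns.of_comp_equiv e.symm
      (admitsSigns_of_forall_length fun m => H _ _ (fun i => (e.symm i).1.2) m)
end

section
/- Let G be a group such that for every finite subset F of G there exists a nontrivial element y ∈ G commuting with every element of F. Then G is inner amenable: there is a conjugation-invariant finitely additive probability measure on G not concentrated at the identity. -/
/-!
Pick, for every finite `F ⊆ G`, a nontrivial `y F` centralizing `F`, and push an ultrafilter
on `Finset G` refining `atTop` forward along `y`. The resulting ultrafilter `𝒰` on `G` misses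
`{1}`, and for each `g` it is concentrated on the centralizer of `g`, where conjugation by `g`
is the identity; hence `𝒰` is conjugation invariant, and so is its `{0, 1}`-valued measure.
-/

open Filter

namespace Ultrafilter

variable {α : Type*} (𝒰 : Ultrafilter α)

open Classical in
noncomputable def mass (A : Set α) : ℝ :=
  if A ∈ 𝒰 then 1 else 0

lemma mass_nonneg (A : Set α) : 0 ≤ 𝒰.mass A := by
  unfold mass; split <;> norm_num

lemma mass_univ : 𝒰.mass Set.univ = 1 :=
  if_pos univ_mem

lemma mass_eq_zero {A : Set α} (hA : A ∉ 𝒰) : 𝒰.mass A = 0 :=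
  if_neg hA

lemma mass_congr {A B : Set α} (h : A ∈ 𝒰 ↔ B ∈ 𝒰) : 𝒰.mass A = 𝒰.mass B := by
  unfold mass
  split_ifs <;> simp_all

lemma mass_union {A B : Set α} (hAB : Disjoint A B) :
    𝒰.mass (A ∪ B) = 𝒰.mass A + 𝒰.mass B := by
  have not_both : ¬ (A ∈ 𝒰 ∧ B ∈ 𝒰) := fun ⟨hA, hB⟩ =>
    𝒰.empty_notMem (hAB.inter_eq ▸ inter_mem hA hB)
  by_cases hA : A ∈ 𝒰 <;> by_cases hB : B ∈ 𝒰 <;>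
    simp_all [mass, union_mem_iff]

end Ultrafilter

lemma Filter.preimage_mem_iff_of_eventually_fixed {α : Type*} {l : Filter α} {f : α → α}
    (hf : ∀ᶠ x in l, f x = x) (A : Set α) : f ⁻¹' A ∈ l ↔ A ∈ l := by
  rw [← mem_map, map_congr hf, map_id']

lemma exists_ultrafilter_centralizing {G : Type*} [Group G]
    (h : ∀ F : Finset G, ∃ y : G, y ≠ 1 ∧ ∀ x ∈ F, x * y = y * x) :
    ∃ 𝒰 : Ultrafilter G, ({1} : Set G) ∉ 𝒰 ∧ ∀ g : G, ∀ᶠ y in 𝒰, Commute g y := by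
  choose y hy_ne_one hy_comm using h
  refine ⟨.map y (.of atTop), ?_, fun g => ?_⟩
  · rw [Ultrafilter.mem_map]
    simp [Set.preimage, hy_ne_one]
  · change {x | Commute g x} ∈ Ultrafilter.map y _
    rw [Ultrafilter.mem_map]
    refine Ultrafilter.of_le atTop ((eventually_ge_atTop {g}).mono fun F hF => ?_)
    exact hy_comm F g (Finset.singleton_subset_iff.mp hF)

/-- If the centralizer of every finite subset of `G` is nontrivial, then `G` is
inner amenable: there is a conjugation-invariant finitely additive probability
measure on `G` vanishing at the identity. -/
theorem stmt11 {G : Type*} [Group G]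
    (h : ∀ F : Finset G, ∃ y : G, y ≠ 1 ∧ ∀ x ∈ F, x * y = y * x) :
    ∃ μ : Set G → ℝ, (∀ A : Set G, 0 ≤ μ A) ∧ μ Set.univ = 1 ∧
      (∀ A B : Set G, Disjoint A B → μ (A ∪ B) = μ A + μ B) ∧
      μ {1} = 0 ∧
      (∀ (g : G) (A : Set G), μ ((fun x => g * x * g⁻¹) '' A) = μ A) := by
  obtain ⟨𝒰, h_one, h_comm⟩ := exists_ultrafilter_centralizing h
  refine ⟨𝒰.mass, 𝒰.mass_nonneg, 𝒰.mass_univ, fun _ _ => 𝒰.mass_union,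
    𝒰.mass_eq_zero h_one, fun g A => 𝒰.mass_congr ?_⟩
  have conj_fixed : ∀ᶠ y in 𝒰, g⁻¹ * y * g⁻¹⁻¹ = y :=
    (h_comm g⁻¹).mono fun y hy => by rw [hy.eq, inv_inv, inv_mul_cancel_right]
  rw [Set.image_eq_preimage_of_inverse (g := fun x => g⁻¹ * x * g⁻¹⁻¹)
    (fun x => by group) (fun x => by group)]
  exact preimage_mem_iff_of_eventually_fixed conj_fixed A
end

section
/- Let G be a subgroup of H. Then G is existentially closed in H if and only if there is an ultrafilter 𝒰 on some index set and an embedding of H into the ultrapower G^𝒰 whose restriction to G is the diagonal embedding. -/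
/-!
If `G` is existentially closed in `H`, then for each finite `F ⊆ H` the multiplication table of
`F`, the inequalities between its elements and the equations `x = g` for `g ∈ F ∩ G` form a
finite system with coefficients in `G` that is solved in `H` by `F` itself, hence solved in `G`.
Such a solution is a local embedding `F → G` fixing `F ∩ G`, and the local embeddings for all `F`
glue, along an ultrafilter on `Finset H` refining `atTop`, to an embedding of `H` into the
ultrapower of `G` which is diagonal on `G`.

Conversely, a system solved in `H` is solved in the ultrapower through the embedding, and by
Łoś's theorem for equations and inequations it is then solved at almost every coordinate, which
is a solution in `G`.
-/

universe u

/-- A system with coefficients from `G ≤ H` (variables `Sum.inl` are coefficient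
slots, `Sum.inr` are unknowns) holds of an assignment in `H`. -/
def SysCHolds {H : Type u} [Group H] {k n : ℕ}
    (S : List (FreeGroup (Fin k ⊕ Fin n) × Bool))
    (a : Fin k → H) (b : Fin n → H) : Prop :=
  ∀ c ∈ S, (c.2 = true → FreeGroup.lift (Sum.elim a b) c.1 = 1) ∧
    (c.2 = false → FreeGroup.lift (Sum.elim a b) c.1 ≠ 1)

open Filter Function

theorem FreeGroup.map_lift {α M N : Type*} [Group M] [Group N] (ψ : M →* N) (f : α → M)
    (w : FreeGroup α) : ψ (lift f w) = lift (ψ ∘ f) w :=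
  lift_unique (ψ.comp (lift f)) (by simp)

theorem FreeGroup.lift_germ_eq_one_iff {α I K : Type*} [Group K] {l : Filter I}
    (c : α → I → K) (w : FreeGroup α) :
    lift (fun v => (c v : Germ l K)) w = 1 ↔ ∀ᶠ i in l, lift (fun v => c v i) w = 1 := by
  have hpt : ∀ i, lift c w i = lift (fun v => c v i) w := fun i =>
    map_lift (Pi.evalMonoidHom (fun _ => K) i) c w
  change lift (Germ.coeMulHom l ∘ c) w = 1 ↔ _
  rw [← map_lift, Germ.coe_coeMulHom, ← Germ.coe_one, Germ.coe_eq]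
  simp only [EventuallyEq, hpt, Pi.one_apply]

theorem Filter.eventually_mem_ultrafilterOf_atTop {α : Type*} (x : α) :
    ∀ᶠ s in (Ultrafilter.of (atTop : Filter (Finset α)) : Filter (Finset α)), x ∈ s :=
  Ultrafilter.of_le _ ((eventually_ge_atTop {x}).mono fun _ => Finset.singleton_subset_iff.1)

section SysCHolds

variable {H K : Type*} [Group H] [Group K] {k n : ℕ}

theorem sysCHolds_map_iff {S : List (FreeGroup (Fin k ⊕ Fin n) × Bool)} {ψ : H →* K}
    (hψ : Injective ψ) {a : Fin k → H} {b : Fin n → H} :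
    SysCHolds S (ψ ∘ a) (ψ ∘ b) ↔ SysCHolds S a b := by
  have key : ∀ w, FreeGroup.lift (Sum.elim (ψ ∘ a) (ψ ∘ b)) w = 1 ↔
      FreeGroup.lift (Sum.elim a b) w = 1 := fun w => by
    rw [← Sum.comp_elim, ← FreeGroup.map_lift, map_eq_one_iff ψ hψ]
  simp only [SysCHolds, ne_eq, key]

/-- Łoś's theorem for systems of equations and inequations. -/
theorem sysCHolds_germ_iff {I : Type*} {𝒰 : Ultrafilter I}
    (S : List (FreeGroup (Fin k ⊕ Fin n) × Bool)) (a : Fin k → I → K) (b : Fin n → I → K) :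
    SysCHolds S (fun j => (a j : Germ (𝒰 : Filter I) K))
        (fun j => (b j : Germ (𝒰 : Filter I) K)) ↔
      ∀ᶠ i in (𝒰 : Filter I), SysCHolds S (fun j => a j i) (fun j => b j i) := by
  have hcoe : Sum.elim (fun j => (a j : Germ (𝒰 : Filter I) K))
      (fun j => (b j : Germ (𝒰 : Filter I) K)) =
        fun v => ((Sum.elim a b v : I → K) : Germ _ K) := by
    ext (j | j) <;> rfl
  have hpt : ∀ i, Sum.elim (fun j => a j i) (fun j => b j i) = fun v => Sum.elim a b v i := by
    intro i; ext (j | j) <;> rfl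
  refine Iff.trans ?_ (eventually_all_finite S.finite_toSet).symm
  refine forall₂_congr fun c _ => ?_
  simp only [hcoe, hpt, ne_eq, FreeGroup.lift_germ_eq_one_iff, ← Ultrafilter.eventually_not,
    ← eventually_imp_distrib_left, ← eventually_and]

open Classical in
/-- The atomic diagram of the family `h`; the coefficient `cᵢ` names `h i` when `h i ∈ s`. -/
noncomputable def diagramSystem (s : Set H) (h : Fin n → H) :
    List (FreeGroup (Fin n ⊕ Fin n) × Bool) :=
  let x : Fin n → FreeGroup (Fin n ⊕ Fin n) := fun i => .of (.inr i)
  let c : Fin n → FreeGroup (Fin n ⊕ Fin n) := fun i => .of (.inl i)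
  ((Finset.univ.filter fun p : Fin n × Fin n × Fin n => h p.1 * h p.2.1 = h p.2.2).toList.map
      fun p => (x p.1 * x p.2.1 * (x p.2.2)⁻¹, true)) ++
    ((Finset.univ.filter fun p : Fin n × Fin n => h p.1 ≠ h p.2).toList.map
      fun p => (x p.1 * (x p.2)⁻¹, false)) ++
    ((Finset.univ.filter fun i => h i ∈ s).toList.map fun i => (x i * (c i)⁻¹, true))

theorem sysCHolds_diagramSystem_iff (s : Set H) (h a b : Fin n → H) :
    SysCHolds (diagramSystem s h) a b ↔
      (∀ i j l, h i * h j = h l → b i * b j = b l) ∧ (∀ i j, h i ≠ h j → b i ≠ b j) ∧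
        ∀ i, h i ∈ s → b i = a i := by
  simp only [SysCHolds, diagramSystem, List.forall_mem_append, List.forall_mem_map]
  simp [mul_inv_eq_one, and_assoc]

end SysCHolds

namespace Subgroup

variable {H : Type*} [Group H] (G : Subgroup H)

def IsExistentiallyClosed : Prop :=
  ∀ (k n : ℕ) (S : List (FreeGroup (Fin k ⊕ Fin n) × Bool)) (a : Fin k → G),
    (∃ b : Fin n → H, SysCHolds S (fun j => (a j : H)) b) →
      ∃ b : Fin n → H, (∀ j, b j ∈ G) ∧ SysCHolds S (fun j => (a j : H)) b

structure IsLocalEmbedding (F : Finset H) (f : H → G) : Prop where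
  map_mul : ∀ x ∈ F, ∀ y ∈ F, x * y ∈ F → f (x * y) = f x * f y
  injOn : Set.InjOn f F
  apply_coe : ∀ g : G, (g : H) ∈ F → f g = g

theorem IsExistentiallyClosed.exists_isLocalEmbedding (hG : G.IsExistentiallyClosed)
    (F : Finset H) : ∃ f : H → G, G.IsLocalEmbedding F f := by
  classical
  let e := F.equivFin
  let h : Fin F.card → H := fun i => e.symm i
  have he : ∀ x (hx : x ∈ F), h (e ⟨x, hx⟩) = x := by simp [h]
  let a : Fin F.card → G := fun i => if hi : h i ∈ G then ⟨h i, hi⟩ else 1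
  have ha : ∀ i, h i ∈ G → (a i : H) = h i := fun i hi => by simp [a, hi]
  obtain ⟨b, hbG, hb⟩ := hG _ _ (diagramSystem G h) a
    ⟨h, (sysCHolds_diagramSystem_iff _ _ _ _).2
      ⟨fun _ _ _ => id, fun _ _ => id, fun i hi => (ha i hi).symm⟩⟩
  obtain ⟨hmul, hne, hfix⟩ := (sysCHolds_diagramSystem_iff _ _ _ _).1 hb
  refine ⟨fun x => if hx : x ∈ F then ⟨b (e ⟨x, hx⟩), hbG _⟩ else 1, ⟨?_, ?_, ?_⟩⟩
  · intro x hx y hy hxy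
    simp only [dif_pos hx, dif_pos hy, dif_pos hxy]
    ext
    exact (hmul _ _ _ (by rw [he, he, he])).symm
  · intro x hx y hy hxy
    simp only [Finset.mem_coe] at hx hy
    simp only [dif_pos hx, dif_pos hy, Subtype.mk.injEq] at hxy
    by_contra hxy'
    exact hne _ _ (by rwa [he, he]) hxy
  · intro g hg
    have hgG : h (e ⟨g, hg⟩) ∈ G := by rw [he]; exact g.2
    ext
    simp only [dif_pos hg]
    rw [hfix _ hgG, ha _ hgG, he]

theorem exists_injective_germ_of_isLocalEmbedding (f : Finset H → H → G)
    (hf : ∀ F, G.IsLocalEmbedding F (f F)) :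
    ∃ φ : H →* Germ (Ultrafilter.of (atTop : Filter (Finset H)) : Filter (Finset H)) G,
      Injective φ ∧ ∀ g : G, φ g = ↑g := by
  have hmem := eventually_mem_ultrafilterOf_atTop (α := H)
  refine ⟨MonoidHom.mk' (fun x => ↑(fun F => f F x)) fun x y => ?_, fun x y hxy => ?_,
    fun g => ?_⟩
  · refine Germ.coe_eq.2 ?_
    filter_upwards [hmem x, hmem y, hmem (x * y)] with F hx hy hxy
    exact (hf F).map_mul x hx y hy hxy
  · obtain ⟨F, hF, hx, hy⟩ := (Germ.coe_eq.1 hxy |>.and ((hmem x).and (hmem y))).exists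
    exact (hf F).injOn hx hy hF
  · exact Germ.coe_eq.2 ((hmem g).mono fun F hg => (hf F).apply_coe g hg)

theorem isExistentiallyClosed_of_injective_germ {I : Type*} (𝒰 : Ultrafilter I)
    (φ : H →* Germ (𝒰 : Filter I) G) (hφ : Injective φ) (hdiag : ∀ g : G, φ g = ↑g) :
    G.IsExistentiallyClosed := by
  rintro k n S a ⟨b, hb⟩
  choose u hu using fun j => Quot.exists_rep (φ (b j))
  have hgerm : SysCHolds S (fun j => ((fun _ => a j : I → G) : Germ (𝒰 : Filter I) G))
      (fun j => (u j : Germ (𝒰 : Filter I) G)) := by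
    convert (sysCHolds_map_iff hφ).2 hb using 1
    · ext j; exact (hdiag (a j)).symm
    · ext j; exact hu j
  obtain ⟨i, hi⟩ := ((sysCHolds_germ_iff S _ _).1 hgerm).exists
  exact ⟨fun j => u j i, fun j => (u j i).2, (sysCHolds_map_iff G.subtype_injective).2 hi⟩

end Subgroup

/-- `G ≤ H` is existentially closed in `H` iff `H` embeds into an ultrapower of
`G` in such a way that the restriction of the embedding to `G` is the diagonal
embedding. -/
theorem stmt13 {H : Type u} [Group H] (G : Subgroup H) :
    (∀ (k n : ℕ) (S : List (FreeGroup (Fin k ⊕ Fin n) × Bool))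
        (a : Fin k → G),
        (∃ b : Fin n → H, SysCHolds S (fun j => (a j : H)) b) →
        ∃ b : Fin n → H, (∀ j, b j ∈ G) ∧ SysCHolds S (fun j => (a j : H)) b) ↔
      ∃ (I : Type u) (𝒰 : Ultrafilter I)
        (φ : H →* Filter.Germ (𝒰 : Filter I) G),
        Function.Injective φ ∧
        ∀ g : G, φ (g : H) = (↑g : Filter.Germ (𝒰 : Filter I) G) := by
  refine ⟨fun hG => ?_, fun ⟨I, 𝒰, φ, hφ, hdiag⟩ =>
    G.isExistentiallyClosed_of_injective_germ 𝒰 φ hφ hdiag⟩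
  choose f hf using Subgroup.IsExistentiallyClosed.exists_isLocalEmbedding G hG
  exact ⟨Finset H, _, G.exists_injective_germ_of_isLocalEmbedding f hf⟩
end

section
/- A group G satisfies no nontrivial group law if and only if the free group F₂ on two generators embeds into some (equivalently, every) ultrapower of G with respect to a nonprincipal ultrafilter on ℕ. -/
/-!
A lawless group violates finitely many nontrivial words simultaneously: if `c` and `v` are
nontrivial and the letter `y` occurs in neither, then `⁅c, y v y⁻¹⁆` is nontrivial and vanishes
wherever `c` or `v` does. Violating the first `m` words of an enumeration of `F₂` at the `m`-th
coordinate gives a pair in the ultrapower at which every nontrivial word is violated on a cofinite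
set of coordinates, so this pair generates a free subgroup.

Conversely, an ultrapower satisfies every law of `G`, and `F₂ = ⟨a, b⟩` is lawless: the
homomorphism `a ↦ shift`, `b ↦ x₀` into `F(ℤ) ⋊ ℤ` maps the elements `aⁱ b a⁻ⁱ` to the free
basis `xᵢ` of `F(ℤ)`.
-/

open scoped commutatorElement
open Filter FreeGroup

universe u

namespace FreeGroup

variable {α β : Type*} {G H : Type*} [Group G] [Group H]

theorem lift_map (a : β → G) (f : α → β) (x : FreeGroup α) :
    lift a (map f x) = lift (a ∘ f) x := by
  induction x using FreeGroup.induction_on <;> simp_all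

theorem lift_comp (φ : G →* H) (a : α → G) (x : FreeGroup α) :
    lift (φ ∘ a) x = φ (lift a x) := by
  induction x using FreeGroup.induction_on <;> simp_all

theorem lift_apply_pi {ι : Type*} (a : α → ι → G) (x : FreeGroup α) (i : ι) :
    lift a x i = lift (fun j => a j i) x := by
  induction x using FreeGroup.induction_on <;> simp_all

def shiftAut : Multiplicative ℤ →* MulAut (FreeGroup ℤ) where
  toFun k := freeGroupCongr (Equiv.addRight k.toAdd)
  map_one' := by ext x; simp
  map_mul' k l := by
    ext x
    simp only [MulAut.mul_apply, freeGroupCongr_apply, map.comp]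
    congr 2
    funext i
    simp only [Function.comp_apply, Equiv.coe_addRight, toAdd_mul]
    ring

theorem injective_lift_conj_zpow :
    Function.Injective (lift fun i : ℤ => (of 0 : FreeGroup (Fin 2)) ^ i * of 1 * (of 0 ^ i)⁻¹) := by
  let ρ : FreeGroup (Fin 2) →* FreeGroup ℤ ⋊[shiftAut] Multiplicative ℤ :=
    lift ![SemidirectProduct.inr (.ofAdd 1), SemidirectProduct.inl (of 0)]
  have hρ : ρ.comp (lift fun i : ℤ => (of 0 : FreeGroup (Fin 2)) ^ i * of 1 * (of 0 ^ i)⁻¹) =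
      SemidirectProduct.inl := by
    refine ext_hom _ _ fun i => ?_
    simp only [ρ, MonoidHom.comp_apply, lift_apply_of, _root_.map_mul, _root_.map_inv, map_zpow,
      Matrix.cons_val_zero, Matrix.cons_val_one]
    rw [← map_zpow, ← ofAdd_zsmul, ← _root_.map_inv, ← SemidirectProduct.inl_aut]
    simp [shiftAut]
  refine Function.Injective.of_comp (f := ρ) ?_
  rw [← MonoidHom.coe_comp, hρ]
  exact SemidirectProduct.inl_injective

/-- In `Perm (F ⊕ F)`, let `F` act by left multiplication on the first summand and let `y` swap
the two units: at `inr 1`, the two products `c * y v y⁻¹` and `y v y⁻¹ * c` give `inl (c * v)` and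
`inl v`. -/
theorem commutator_map_some_conj_ne_one {c v : FreeGroup α} (hc : c ≠ 1) (hv : v ≠ 1) :
    ⁅map some c, of none * map some v * (of none)⁻¹⁆ ≠ 1 := by
  classical
  let σ : FreeGroup α →* Equiv.Perm (FreeGroup α ⊕ FreeGroup α) :=
    (Equiv.Perm.sumCongrHom _ _).comp ((MonoidHom.inl _ _).comp (MulAction.toPermHom _ _))
  let τ : Equiv.Perm (FreeGroup α ⊕ FreeGroup α) := Equiv.swap (.inl 1) (.inr 1)
  let ρ := lift fun o : Option α => o.elim τ (σ ∘ of)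
  have hρ (x : FreeGroup α) : ρ (map some x) = σ x := by
    rw [lift_map]; exact (lift_unique σ fun _ => rfl).symm
  have hτ : ρ (of none) = τ := lift_apply_of
  intro h
  rw [commutatorElement_eq_one_iff_mul_comm] at h
  have := congrArg (fun p => ρ p (.inr 1)) h
  simp [hρ, hτ, τ, σ, Equiv.swap_apply_of_ne_of_ne, hv, hc] at this

theorem exists_ne_one_of_forall_ne_one {α : Type u} [Finite α] (G : Type*) [Group G]
    (vs : List (FreeGroup α)) (hvs : ∀ v ∈ vs, v ≠ 1) :
    ∃ (β : Type u) (_ : Finite β) (ι : α → β) (c : FreeGroup β), Function.Injective ι ∧ c ≠ 1 ∧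
      ∀ a : β → G, lift a c ≠ 1 → ∀ v ∈ vs, lift (a ∘ ι) v ≠ 1 := by
  induction vs with
  | nil => exact ⟨Option α, inferInstance, some, of none, Option.some_injective _, of_ne_one _,
      by simp⟩
  | cons v vs ih =>
    obtain ⟨β, _, ι, c, hι, hc, hcvs⟩ := ih fun w hw => hvs w (.tail _ hw)
    refine ⟨Option β, inferInstance, some ∘ ι,
      ⁅map some c, of none * map some (map ι v) * (of none)⁻¹⁆, (Option.some_injective _).comp hι,
      commutator_map_some_conj_ne_one hc ((map_injective hι).ne (hvs v (.head _))), ?_⟩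
    intro a ha
    have hc' : lift (a ∘ some) c ≠ 1 := by
      rintro h; apply ha; simp [commutatorElement_def, lift_map, h]
    have hv' : lift ((a ∘ some) ∘ ι) v ≠ 1 := by
      rintro h; apply ha; simp [commutatorElement_def, lift_map, h]
    rintro w (_ | ⟨_, hw⟩)
    · exact hv'
    · exact hcvs _ hc' w hw

end FreeGroup

def IsLawless (G : Type*) [Group G] : Prop :=
  ∀ (n : ℕ) (w : FreeGroup (Fin n)), w ≠ 1 → ∃ a : Fin n → G, lift a w ≠ 1

theorem isLawless_freeGroup_fin_two : IsLawless (FreeGroup (Fin 2)) := by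
  intro n w hw
  refine ⟨(fun i : ℤ => (of 0 : FreeGroup (Fin 2)) ^ i * of 1 * (of 0 ^ i)⁻¹) ∘ (↑), ?_⟩
  rw [← lift_map, map_ne_one_iff _ injective_lift_conj_zpow]
  exact (map_ne_one_iff _ (map_injective (Nat.cast_injective.comp Fin.val_injective))).2 hw

namespace IsLawless

variable {G H : Type*} [Group G] [Group H]

theorem of_injective (φ : G →* H) (hφ : Function.Injective φ) (hG : IsLawless G) :
    IsLawless H := by
  intro n w hw
  obtain ⟨a, ha⟩ := hG n w hw
  exact ⟨φ ∘ a, by rwa [lift_comp, map_ne_one_iff φ hφ]⟩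

theorem of_germ {ι : Type*} {l : Filter ι} (hG : IsLawless (Germ l G)) : IsLawless G := by
  intro n w hw
  obtain ⟨a, ha⟩ := hG n w hw
  choose f hf using fun i => Germ.inductionOn (p := fun g => ∃ f : ι → G, ↑f = g) (a i)
    fun f => ⟨f, rfl⟩
  by_contra! hlaw
  have hlift : lift f w = 1 := funext fun m => by rw [lift_apply_pi]; exact hlaw _
  apply ha
  rw [← funext hf, ← Germ.coe_coeMulHom]
  change lift (Germ.coeMulHom l ∘ f) w = 1
  rw [lift_comp, hlift, _root_.map_one]

theorem exists_lift_ne_one {β : Type*} [Finite β] (hG : IsLawless G) {w : FreeGroup β}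
    (hw : w ≠ 1) : ∃ a : β → G, lift a w ≠ 1 := by
  obtain ⟨n, ⟨e⟩⟩ := Finite.exists_equiv_fin β
  obtain ⟨a, ha⟩ := hG n (map e w) (by simpa using (FreeGroup.map_injective e.injective).ne hw)
  exact ⟨a ∘ e, by rwa [← lift_map]⟩

theorem exists_forall_lift_ne_one {α : Type u} [Finite α] (hG : IsLawless G)
    (vs : List (FreeGroup α)) (hvs : ∀ v ∈ vs, v ≠ 1) : ∃ a : α → G, ∀ v ∈ vs, lift a v ≠ 1 := by
  obtain ⟨β, _, ι, c, -, hc, hcvs⟩ := exists_ne_one_of_forall_ne_one G vs hvs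
  obtain ⟨a, ha⟩ := hG.exists_lift_ne_one hc
  exact ⟨a ∘ ι, hcvs a ha⟩

theorem exists_injective_germ {α : Type*} [Finite α] (hG : IsLawless G) (l : Filter ℕ) [l.NeBot]
    (hl : l ≤ cofinite) : ∃ φ : FreeGroup α →* Germ l G, Function.Injective φ := by
  classical
  obtain ⟨e, he⟩ := exists_surjective_nat (FreeGroup α)
  have (m : ℕ) : ∃ a : α → G, ∀ k < m, e k ≠ 1 → lift a (e k) ≠ 1 := by
    obtain ⟨a, ha⟩ := hG.exists_forall_lift_ne_one (((List.range m).map e).filter (· ≠ 1))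
      (by simp)
    exact ⟨a, fun k hk hek => ha _ (by simpa using ⟨⟨k, hk, rfl⟩, hek⟩)⟩
  choose a ha using this
  refine ⟨(Germ.coeMulHom l).comp (lift fun i m => a m i),
    (injective_iff_map_eq_one _).2 fun w hw => ?_⟩
  obtain ⟨k, rfl⟩ := he w
  by_contra hk
  have hvanish : ∀ᶠ m in l, lift (a m) (e k) = 1 := by
    filter_upwards [Germ.coe_eq.1 hw] with m hm
    simpa [lift_apply_pi] using hm
  have hviolate : ∀ᶠ m in l, lift (a m) (e k) ≠ 1 :=
    (Nat.cofinite_eq_atTop ▸ eventually_gt_atTop k).filter_mono hl |>.mono fun m hm => ha m k hm hk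
  exact (hvanish.and hviolate).exists.elim fun _ h => h.2 h.1

end IsLawless

/-- A group `G` satisfies no nontrivial law iff the free group `F₂` embeds into
the ultrapower of `G` with respect to a nonprincipal ultrafilter on `ℕ`. -/
theorem stmt15 {G : Type*} [Group G]
    (𝒰 : Ultrafilter ℕ) (h𝒰 : (𝒰 : Filter ℕ) ≤ Filter.cofinite) :
    (∀ (n : ℕ) (w : FreeGroup (Fin n)), w ≠ 1 →
        ∃ a : Fin n → G, FreeGroup.lift a w ≠ 1) ↔
      ∃ φ : FreeGroup (Fin 2) →* Filter.Germ (𝒰 : Filter ℕ) G,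
        Function.Injective φ :=
  ⟨fun hG => IsLawless.exists_injective_germ hG _ h𝒰,
    fun ⟨φ, hφ⟩ => (isLawless_freeGroup_fin_two.of_injective φ hφ).of_germ⟩
end

section
/- Let w be a group word and let 𝔊_w be the class of groups satisfying the law w = e. If every group in 𝔊_w that is amenable has all its ultrapowers amenable, then the class of amenable groups in 𝔊_w is closed under arbitrary ultraproducts. -/
universe u

open scoped Classical in
/-- The Følner condition (amenability) for a discrete group. -/
def FolnerCond (G : Type u) [Group G] : Prop :=
  ∀ (F : Finset G) (ε : ℝ), 0 < ε → ∃ K : Finset G, K.Nonempty ∧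
    ∀ g ∈ F, ((symmDiff (K.image fun x => g * x) K).card : ℝ) < ε * K.card

/-- `G` satisfies the law `w = e`. -/
def SatLaw {n : ℕ} (w : FreeGroup (Fin n)) (G : Type u) [Group G] : Prop :=
  ∀ a : Fin n → G, FreeGroup.lift a w = 1

/-!
The direct sum `⊕ i, G i` of amenable groups satisfying `w` is amenable: each finite subset
lies in a finite product `∏ i ∈ S, G i`, amenability passes to finite products, and it is a local
property. It satisfies `w` as a subgroup of `∏ i, G i`, so by hypothesis its ultrapowers are
amenable. The ultraproduct `∏_𝒰 G i` embeds into the ultrapower `(⊕ i, G i)^𝒰` via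
`f ↦ [i ↦ single i (f i)]`, and amenability passes to subgroups: a Følner set of the ambient group
splits along the right cosets of the subgroup, and one of the pieces, translated back into the
subgroup, is again a Følner set. The law passes from `∏ i, G i` to its quotient.
-/

open scoped Classical symmDiff
open Function

section Displacement

variable {G H : Type u} [Group G] [Group H]

noncomputable def displacement (g : G) (K : Finset G) : ℕ := (K.image (g * ·) ∆ K).card

theorem folnerCond_iff : FolnerCond G ↔ ∀ (F : Finset G) (ε : ℝ), 0 < ε →
    ∃ K : Finset G, K.Nonempty ∧ ∀ g ∈ F, (displacement g K : ℝ) < ε * K.card :=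
  Iff.rfl

theorem displacement_image_of_injective {φ : H →* G} (hφ : Injective φ) (h : H) (K : Finset H) :
    displacement (φ h) (K.image φ) = displacement h K := by
  have hcomm : (φ h * ·) ∘ φ = φ ∘ (h * ·) := funext fun x => (map_mul φ h x).symm
  rw [displacement, Finset.image_image, hcomm, ← Finset.image_image,
    ← Finset.image_symmDiff _ _ hφ, Finset.card_image_of_injective _ hφ, displacement]

theorem displacement_image_mul_right (g x : G) (K : Finset G) :
    displacement g (K.image (· * x)) = displacement g K := by
  have hcomm : (g * ·) ∘ (· * x) = (· * x) ∘ (g * ·) := funext fun y => (mul_assoc g y x).symm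
  rw [displacement, Finset.image_image, hcomm, ← Finset.image_image,
    ← Finset.image_symmDiff _ _ (mul_left_injective x),
    Finset.card_image_of_injective _ (mul_left_injective x), displacement]

end Displacement

namespace FolnerCond

variable {G H : Type u} [Group G] [Group H]

theorem of_mulEquiv (e : H ≃* G) (hH : FolnerCond H) : FolnerCond G := by
  rw [folnerCond_iff] at hH ⊢
  intro F ε hε
  obtain ⟨K, hK, hKF⟩ := hH (F.image e.symm) ε hε
  refine ⟨K.image e, hK.image _, fun g hg => ?_⟩
  have hdisp := displacement_image_of_injective (φ := e.toMonoidHom) e.injective (e.symm g) K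
  simp only [MulEquiv.coe_toMonoidHom, MulEquiv.apply_symm_apply] at hdisp
  rw [hdisp, Finset.card_image_of_injective _ e.injective]
  exact hKF _ (Finset.mem_image_of_mem _ hg)

theorem of_forall_exists_subgroup
    (h : ∀ F : Finset G, ∃ H : Subgroup G, (F : Set G) ⊆ H ∧ FolnerCond H) : FolnerCond G := by
  rw [folnerCond_iff]
  intro F ε hε
  obtain ⟨H, hFH, hH⟩ := h F
  obtain ⟨F', -, rfl⟩ : ∃ F' : Finset H, (F' : Set H) ⊆ Set.univ ∧ F'.image H.subtype = F :=
    Finset.subset_set_image_iff.1 (by simpa using hFH)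
  obtain ⟨K, hK, hKF⟩ := folnerCond_iff.1 hH F' ε hε
  refine ⟨K.image H.subtype, hK.image _, fun _ hgF => ?_⟩
  obtain ⟨g, hg, rfl⟩ := Finset.mem_image.1 hgF
  rw [displacement_image_of_injective H.subtype_injective,
    Finset.card_image_of_injective _ H.subtype_injective]
  exact hKF g hg

theorem of_subsingleton [Subsingleton G] : FolnerCond G := fun _ _ hε =>
  ⟨{1}, Finset.singleton_nonempty 1, fun g _ => by
    simpa [displacement, Subsingleton.elim (g * 1) 1] using hε⟩

end FolnerCond

theorem Finset.card_product_symmDiff_product_le {α β : Type*} [DecidableEq α] [DecidableEq β]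
    (A C : Finset α) (B D : Finset β) :
    ((A ×ˢ B) ∆ (C ×ˢ D)).card ≤ (A ∆ C).card * (B ∪ D).card + (A ∪ C).card * (B ∆ D).card := by
  have hsub : (A ×ˢ B) ∆ (C ×ˢ D) ⊆ (A ∆ C) ×ˢ (B ∪ D) ∪ (A ∪ C) ×ˢ (B ∆ D) := by
    intro x
    simp only [Finset.mem_symmDiff, Finset.mem_product, Finset.mem_union]
    tauto
  calc ((A ×ˢ B) ∆ (C ×ˢ D)).card ≤ ((A ∆ C) ×ˢ (B ∪ D) ∪ (A ∪ C) ×ˢ (B ∆ D)).card :=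
        Finset.card_le_card hsub
    _ ≤ _ := by
      simpa only [Finset.card_product] using
        Finset.card_union_le ((A ∆ C) ×ˢ (B ∪ D)) ((A ∪ C) ×ˢ (B ∆ D))

section Product

variable {G H : Type u} [Group G] [Group H]

theorem displacement_prod_le (g : G) (h : H) (K : Finset G) (L : Finset H) :
    displacement (g, h) (K ×ˢ L) ≤
      displacement g K * (2 * L.card) + 2 * K.card * displacement h L := by
  have hdisp : displacement (g, h) (K ×ˢ L) =
      ((K.image (g * ·) ×ˢ L.image (h * ·)) ∆ (K ×ˢ L)).card := by
    unfold displacement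
    congr 1
    convert congrArg (· ∆ (K ×ˢ L)) (Finset.prodMap_image_product (g * ·) (h * ·) K L)
    rfl
  have hunion : ∀ {α : Type u} [Group α] (a : α) (M : Finset α),
      (M.image (a * ·) ∪ M).card ≤ 2 * M.card := fun a M => by
    have := Finset.card_union_le (M.image (a * ·)) M
    rw [Finset.card_image_of_injective _ (mul_right_injective a)] at this
    omega
  rw [hdisp]
  refine (Finset.card_product_symmDiff_product_le _ _ _ _).trans ?_
  exact add_le_add (Nat.mul_le_mul_left _ (hunion h L)) (Nat.mul_le_mul_right _ (hunion g K))

theorem FolnerCond.prod (hG : FolnerCond G) (hH : FolnerCond H) : FolnerCond (G × H) := by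
  rw [folnerCond_iff] at hG hH ⊢
  intro F ε hε
  obtain ⟨K, hK, hKF⟩ := hG (F.image Prod.fst) (ε / 4) (by positivity)
  obtain ⟨L, hL, hLF⟩ := hH (F.image Prod.snd) (ε / 4) (by positivity)
  refine ⟨K ×ˢ L, hK.product hL, fun ⟨g, h⟩ hgh => ?_⟩
  have hg := hKF g (Finset.mem_image_of_mem Prod.fst hgh)
  have hh := hLF h (Finset.mem_image_of_mem Prod.snd hgh)
  have hKpos : (0 : ℝ) < K.card := by exact_mod_cast hK.card_pos
  have hLpos : (0 : ℝ) < L.card := by exact_mod_cast hL.card_pos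
  have hle : (displacement (g, h) (K ×ˢ L) : ℝ) ≤
      displacement g K * (2 * L.card) + 2 * K.card * displacement h L := by
    exact_mod_cast displacement_prod_le g h K L
  rw [Finset.card_product, Nat.cast_mul]
  nlinarith

end Product

theorem FolnerCond.pi {J : Type u} [Finite J] {G : J → Type u} [∀ j, Group (G j)]
    (hG : ∀ j, FolnerCond (G j)) : FolnerCond (∀ j, G j) := by
  have := Fintype.ofFinite J
  refine Fintype.induction_empty_option (P := fun J _ => ∀ (G : J → Type u) [∀ j, Group (G j)],
      (∀ j, FolnerCond (G j)) → FolnerCond (∀ j, G j)) ?_ ?_ ?_ J G hG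
  · intro J J' _ e ih G _ hG
    exact (ih (fun j => G (e j)) fun j => hG (e j)).of_mulEquiv
      (MulEquiv.mk' (Equiv.piCongrLeft' G e.symm) fun _ _ => rfl).symm
  · intro G _ _
    exact of_subsingleton
  · intro J _ ih G _ hG
    exact ((hG none).prod (ih (fun j => G (some j)) fun j => hG (some j))).of_mulEquiv
      (MulEquiv.mk' Equiv.piOptionEquivProd fun _ _ => rfl).symm

theorem Finset.filter_symmDiff_distrib {α : Type*} [DecidableEq α] (s t : Finset α)
    (p : α → Prop) [DecidablePred p] : (s ∆ t).filter p = s.filter p ∆ t.filter p := by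
  ext x
  simp only [Finset.mem_filter, Finset.mem_symmDiff]
  tauto

namespace Subgroup

variable {G : Type u} [Group G] (H : Subgroup G)

theorem exists_finset_displacement_eq_of_subset_rightCoset {K : Finset G} {x : G}
    (hK : ∀ y ∈ K, y * x⁻¹ ∈ H) :
    ∃ L : Finset H, L.card = K.card ∧ ∀ g : H, displacement g L = displacement (g : G) K := by
  obtain ⟨L, -, hL⟩ : ∃ L : Finset H, (L : Set H) ⊆ Set.univ ∧
      L.image H.subtype = K.image (· * x⁻¹) :=
    Finset.subset_set_image_iff.1 fun y hy => by
      obtain ⟨z, hz, rfl⟩ := Finset.mem_image.1 hy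
      simpa using hK z hz
  refine ⟨L, ?_, fun g => ?_⟩
  · rw [← Finset.card_image_of_injective L H.subtype_injective, hL,
      Finset.card_image_of_injective _ (mul_left_injective x⁻¹)]
  · rw [← displacement_image_of_injective H.subtype_injective, hL,
      displacement_image_mul_right, coe_subtype]

variable {H}

theorem mk_rightRel_mul_left_of_mem {g : G} (hg : g ∈ H) (y : G) :
    (Quotient.mk (QuotientGroup.rightRel H) (g * y)) = Quotient.mk _ y :=
  Quotient.sound <| QuotientGroup.rightRel_apply.2 <| by simpa [mul_assoc] using inv_mem hg

theorem filter_image_mul_symmDiff_eq {g : G} (hg : g ∈ H) (K : Finset G)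
    (c : Quotient (QuotientGroup.rightRel H)) :
    (K.image (g * ·) ∆ K).filter (Quotient.mk _ · = c) =
      (K.filter (Quotient.mk _ · = c)).image (g * ·) ∆ K.filter (Quotient.mk _ · = c) := by
  rw [Finset.filter_symmDiff_distrib, Finset.filter_image]
  simp only [mk_rightRel_mul_left_of_mem hg]

theorem sum_sum_displacement_filter {F K : Finset G} (hF : ∀ g ∈ F, g ∈ H) :
    ∑ c ∈ K.image (Quotient.mk (QuotientGroup.rightRel H)), ∑ g ∈ F,
      displacement g (K.filter (Quotient.mk _ · = c)) = ∑ g ∈ F, displacement g K := by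
  rw [Finset.sum_comm]
  refine Finset.sum_congr rfl fun g hg => ?_
  rw [displacement,
    Finset.card_eq_sum_card_fiberwise (f := Quotient.mk (QuotientGroup.rightRel H)) fun y hy => ?_]
  · exact Finset.sum_congr rfl fun c _ => by
      rw [filter_image_mul_symmDiff_eq (hF g hg), displacement]
  · rcases Finset.mem_symmDiff.1 hy with ⟨hy, -⟩ | ⟨hy, -⟩
    · obtain ⟨z, hz, rfl⟩ := Finset.mem_image.1 hy
      rw [Finset.mem_coe, mk_rightRel_mul_left_of_mem (hF g hg)]
      exact Finset.mem_image_of_mem _ hz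
    · exact Finset.mem_image_of_mem _ hy

end Subgroup

theorem FolnerCond.subgroup {G : Type u} [Group G] (hG : FolnerCond G) (H : Subgroup G) :
    FolnerCond H := by
  rw [folnerCond_iff] at hG ⊢
  intro F ε hε
  set F' := F.image H.subtype
  have hF' : ∀ g ∈ F', g ∈ H := fun g hg => by
    obtain ⟨g, -, rfl⟩ := Finset.mem_image.1 hg
    exact g.2
  obtain ⟨K, hK, hKF⟩ := hG F' (ε / (F'.card + 1)) (by positivity)
  have hKpos : (0 : ℝ) < K.card := by exact_mod_cast hK.card_pos
  have hsum : (∑ g ∈ F', displacement g K : ℝ) < ε * K.card :=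
    calc (∑ g ∈ F', displacement g K : ℝ) ≤ ∑ _g ∈ F', ε / (F'.card + 1) * K.card :=
          Finset.sum_le_sum fun g hg => (hKF g hg).le
      _ = F'.card / (F'.card + 1) * (ε * K.card) := by
          rw [Finset.sum_const, nsmul_eq_mul]; ring
      _ < ε * K.card := mul_lt_of_lt_one_left (by positivity)
          ((div_lt_one (by positivity)).2 (lt_add_one _))
  -- pigeonhole over the right cosets of `H` met by `K`
  set q := Quotient.mk (QuotientGroup.rightRel H)
  obtain ⟨c, hc, hcF⟩ : ∃ c ∈ K.image q, (∑ g ∈ F', displacement g (K.filter (q · = c)) : ℝ) <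
      ε * (K.filter (q · = c)).card := by
    refine Finset.exists_lt_of_sum_lt ?_
    have h : ((∑ g ∈ F', displacement g K : ℕ) : ℝ) < ε * (K.card : ℕ) := by exact_mod_cast hsum
    rw [← H.sum_sum_displacement_filter hF',
      Finset.card_eq_sum_card_fiberwise fun y hy => Finset.mem_image_of_mem q hy] at h
    rw [← Finset.mul_sum]
    exact_mod_cast h
  obtain ⟨x, hxK, rfl⟩ := Finset.mem_image.1 hc
  obtain ⟨L, hLcard, hL⟩ := H.exists_finset_displacement_eq_of_subset_rightCoset
    (K := K.filter (q · = q x)) (x := x) fun y hy =>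
      QuotientGroup.rightRel_apply.1 (Quotient.exact (Finset.mem_filter.1 hy).2.symm)
  refine ⟨L, Finset.card_pos.1 (hLcard ▸ Finset.card_pos.2 ⟨x, by simp [hxK]⟩), fun g hg => ?_⟩
  rw [hL, hLcard]
  refine lt_of_le_of_lt ?_ hcF
  exact_mod_cast Finset.single_le_sum (f := fun g => displacement g (K.filter (q · = q x)))
    (fun _ _ => Nat.zero_le _) (Finset.mem_image_of_mem H.subtype hg)

theorem FolnerCond.of_injective {G H : Type u} [Group G] [Group H] {φ : H →* G}
    (hφ : Injective φ) (hG : FolnerCond G) : FolnerCond H :=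
  (hG.subgroup φ.range).of_mulEquiv (MonoidHom.ofInjective hφ).symm

theorem map_freeGroupLift {α A B : Type*} [Group A] [Group B] (φ : A →* B) (a : α → A)
    (w : FreeGroup α) : φ (FreeGroup.lift a w) = FreeGroup.lift (φ ∘ a) w :=
  FreeGroup.lift_unique (φ.comp (FreeGroup.lift a)) (by simp)

namespace SatLaw

variable {n : ℕ} {w : FreeGroup (Fin n)}

theorem pi {I : Type u} {G : I → Type u} [∀ i, Group (G i)] (hG : ∀ i, SatLaw w (G i)) :
    SatLaw w (∀ i, G i) := fun a => funext fun i =>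
  (map_freeGroupLift (Pi.evalMonoidHom G i) a w).trans (hG i _)

theorem of_injective {A B : Type u} [Group A] [Group B] {φ : A →* B} (hφ : Injective φ)
    (hB : SatLaw w B) : SatLaw w A := fun a =>
  hφ <| by rw [map_freeGroupLift, map_one]; exact hB _

theorem of_surjective {A B : Type u} [Group A] [Group B] {φ : A →* B} (hφ : Surjective φ)
    (hA : SatLaw w A) : SatLaw w B := fun b => by
  obtain ⟨a, rfl⟩ : ∃ a : Fin n → A, φ ∘ a = b := hφ.comp_left b
  rw [← map_freeGroupLift, hA a, map_one]

end SatLaw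

section FiniteSupport

variable {I : Type u} (G : I → Type u) [∀ i, Group (G i)]

def finiteSupportSubgroup : Subgroup (∀ i, G i) where
  carrier := {f | {i | f i ≠ 1}.Finite}
  one_mem' := by simp
  mul_mem' hf hg := (hf.union hg).subset fun _ hi => by_contra fun h => hi (by simp_all)
  inv_mem' hf := by simpa using hf

namespace finiteSupportSubgroup

def supportedIn (S : Finset I) : Subgroup (finiteSupportSubgroup G) where
  carrier := {f | ∀ i ∉ S, (f : ∀ i, G i) i = 1}
  one_mem' _ _ := rfl
  mul_mem' hf hg i hi := by simp [hf i hi, hg i hi]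
  inv_mem' hf i hi := by simp [hf i hi]

theorem folnerCond_supportedIn (hG : ∀ i, FolnerCond (G i)) (S : Finset I) :
    FolnerCond (supportedIn G S) := by
  let restrict : supportedIn G S →* ∀ j : S, G j :=
    (MonoidHom.pi fun j : S => Pi.evalMonoidHom G j).comp
      ((finiteSupportSubgroup G).subtype.comp (supportedIn G S).subtype)
  refine (FolnerCond.pi fun j : S => hG j).of_injective (φ := restrict) fun f f' h => ?_
  refine Subtype.ext <| Subtype.ext <| funext fun i => ?_
  by_cases hi : i ∈ S
  · exact congrFun h ⟨i, hi⟩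
  · rw [f.2 i hi, f'.2 i hi]

theorem folnerCond (hG : ∀ i, FolnerCond (G i)) : FolnerCond (finiteSupportSubgroup G) := by
  refine FolnerCond.of_forall_exists_subgroup fun F =>
    ⟨supportedIn G (F.sup fun f => f.2.toFinset), fun f hf i hi => ?_,
      folnerCond_supportedIn G hG _⟩
  by_contra hfi
  exact hi (Finset.le_sup (f := fun f : finiteSupportSubgroup G => f.2.toFinset) hf
    (Set.Finite.mem_toFinset _ |>.2 hfi))

noncomputable def single (i : I) : G i →* finiteSupportSubgroup G :=
  (MonoidHom.mulSingle G i).codRestrict _ fun x =>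
    (Set.finite_singleton i).subset fun _ hj =>
      by_contra fun hji => hj (Pi.mulSingle_eq_of_ne hji x)

theorem single_eq_one_iff {i : I} {x : G i} : single G i x = 1 ↔ x = 1 :=
  Subtype.ext_iff.trans Pi.mulSingle_eq_one_iff

noncomputable def toGerm (𝒰 : Ultrafilter I) :
    (∀ i, G i) →* (𝒰 : Filter I).Germ (finiteSupportSubgroup G) :=
  (Filter.Germ.coeMulHom _).comp (MonoidHom.pi fun i => (single G i).comp (Pi.evalMonoidHom G i))

theorem toGerm_eq_one_iff (𝒰 : Ultrafilter I) (f : ∀ i, G i) :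
    toGerm G 𝒰 f = 1 ↔ ∀ᶠ i in (𝒰 : Filter I), f i = 1 := by
  rw [← Filter.Germ.coe_one, toGerm, MonoidHom.comp_apply, Filter.Germ.coe_coeMulHom,
    Filter.Germ.coe_eq]
  simp [Filter.EventuallyEq, single_eq_one_iff]

end finiteSupportSubgroup

end FiniteSupport

theorem FolnerCond.of_ker_eq {A K B : Type u} [Group A] [Group K] [Group B] {π : A →* K}
    (hπ : Surjective π) {ψ : A →* B} (hker : π.ker = ψ.ker) (hB : FolnerCond B) :
    FolnerCond K :=
  hB.of_injective (φ := (QuotientGroup.kerLift ψ).comp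
      ((QuotientGroup.quotientMulEquivOfEq hker).toMonoidHom.comp
        (QuotientGroup.quotientKerEquivOfSurjective π hπ).symm.toMonoidHom))
    ((QuotientGroup.kerLift_injective ψ).comp
      ((QuotientGroup.quotientMulEquivOfEq hker).injective.comp
        (QuotientGroup.quotientKerEquivOfSurjective π hπ).symm.injective))

/-- If every amenable group satisfying the law `w = e` has all of its ultrapowers
amenable, then the class of amenable groups satisfying the law `w = e` is closed
under arbitrary ultraproducts (realized as quotients of direct products by the
subgroup of `𝒰`-almost everywhere trivial elements). -/
theorem stmt16 {n : ℕ} (w : FreeGroup (Fin n))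
    (hyp : ∀ (G : Type u) [Group G], FolnerCond G → SatLaw w G →
      ∀ (I : Type u) (𝒰 : Ultrafilter I),
        FolnerCond (Filter.Germ (𝒰 : Filter I) G)) :
    ∀ (I : Type u) (G : I → Type u) [∀ i, Group (G i)] (𝒰 : Ultrafilter I),
      (∀ i, FolnerCond (G i) ∧ SatLaw w (G i)) →
      ∀ (K : Type u) [Group K] (π : (∀ i, G i) →* K),
        Function.Surjective π →
        (∀ f : ∀ i, G i, π f = 1 ↔ ∀ᶠ i in (𝒰 : Filter I), f i = 1) →
        FolnerCond K ∧ SatLaw w K := by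
  intro I G _ 𝒰 hG K _ π hπ hker
  have hlaw : SatLaw w (∀ i, G i) := SatLaw.pi fun i => (hG i).2
  have hsum : FolnerCond (finiteSupportSubgroup G) :=
    finiteSupportSubgroup.folnerCond G fun i => (hG i).1
  have hker' : π.ker = (finiteSupportSubgroup.toGerm G 𝒰).ker := by
    ext f
    rw [MonoidHom.mem_ker, MonoidHom.mem_ker, hker, finiteSupportSubgroup.toGerm_eq_one_iff]
  have hultrapower : FolnerCond ((𝒰 : Filter I).Germ (finiteSupportSubgroup G)) :=
    hyp _ hsum (hlaw.of_injective (Subgroup.subtype_injective _)) I 𝒰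
  exact ⟨hultrapower.of_ker_eq hπ hker', hlaw.of_surjective hπ⟩
end

section
/- For any group G, the set of left-invariant total orders on G (identified with their positive cones, as subsets of G) is a closed subset of the power set 2^G with the product topology. Consequently, if every finitely generated subgroup of G is left-orderable, then G is left-orderable. -/
lemma isClosed_setOf_eval₃ {X : Type*} (a b c : X) (p : Bool → Bool → Bool → Prop) :
    IsClosed {P : X → Bool | p (P a) (P b) (P c)} :=
  (isClosed_discrete {t : Bool × Bool × Bool | p t.1 t.2.1 t.2.2}).preimage
    (f := fun P : X → Bool => (P a, P b, P c)) (by fun_prop)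

namespace LeftOrderable

variable {G : Type*} [Group G]

def conesOn (A : Set G) : Set (G → Bool) :=
  {P | (∀ a ∈ A, ∀ b ∈ A, P a = true → P b = true → P (a * b) = true) ∧
    (∀ g ∈ A, P g = true ∨ P g⁻¹ = true ∨ g = 1) ∧
    (∀ g ∈ A, P g = true → P g⁻¹ ≠ true) ∧ P 1 ≠ true}

lemma isClosed_conesOn (A : Set G) : IsClosed (conesOn A) := by
  simp only [conesOn, Set.ofPred_and, Set.ofPred_forall]
  refine .inter ?_ (.inter ?_ (.inter ?_ ?_))
  · exact isClosed_iInter fun a => isClosed_iInter fun _ => isClosed_iInter fun b =>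
      isClosed_iInter fun _ => isClosed_setOf_eval₃ a b (a * b) fun x y z => x → y → z
  · exact isClosed_iInter fun g => isClosed_iInter fun _ =>
      isClosed_setOf_eval₃ g g⁻¹ g fun x y _ => x ∨ y ∨ g = 1
  · exact isClosed_iInter fun g => isClosed_iInter fun _ =>
      isClosed_setOf_eval₃ g g⁻¹ g fun x y _ => x → y ≠ true
  · exact isClosed_setOf_eval₃ 1 1 1 fun x _ _ => x ≠ true

lemma conesOn_anti {A B : Set G} (h : A ⊆ B) : conesOn B ⊆ conesOn A :=
  fun _ ⟨hmul, htotal, hasymm, hone⟩ =>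
    ⟨fun a ha b hb => hmul a (h ha) b (h hb), fun g hg => htotal g (h hg),
      fun g hg => hasymm g (h hg), hone⟩

lemma iInter_conesOn_finset : ⋂ F : Finset G, conesOn (F : Set G) = conesOn Set.univ := by
  refine subset_antisymm (fun P hP => ?_)
    (Set.subset_iInter fun F => conesOn_anti (Set.subset_univ _))
  classical
  rw [Set.mem_iInter] at hP
  exact ⟨fun a _ b _ => (hP {a, b}).1 a (by simp) b (by simp),
    fun g _ => (hP {g}).2.1 g (by simp), fun g _ => (hP {g}).2.2.1 g (by simp), (hP ∅).2.2.2⟩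

lemma conesOn_univ_nonempty (h : ∀ F : Finset G, (conesOn (F : Set G)).Nonempty) :
    (conesOn (Set.univ : Set G)).Nonempty := by
  classical
  have hdir : Directed (· ⊇ ·) fun F : Finset G => conesOn (F : Set G) := fun F F' =>
    ⟨F ∪ F', conesOn_anti (by simp), conesOn_anti (by simp)⟩
  rw [← iInter_conesOn_finset]
  exact IsCompact.nonempty_iInter_of_directed_nonempty_isCompact_isClosed _ hdir h
    (fun F => (isClosed_conesOn _).isCompact) fun F => isClosed_conesOn _

/-- The positive cone of a left order on `H`, extended by `false` outside `H`. -/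
noncomputable def positiveCone (H : Subgroup G) (lt : H → H → Prop) (g : G) : Bool :=
  open Classical in if hg : g ∈ H then decide (lt 1 ⟨g, hg⟩) else false

lemma positiveCone_coe {H : Subgroup G} (lt : H → H → Prop) (x : H) :
    positiveCone H lt x = true ↔ lt 1 x := by
  simp [positiveCone]

lemma positiveCone_mem_conesOn {H : Subgroup G} {lt : H → H → Prop} [IsStrictTotalOrder H lt]
    (hinv : ∀ f g h : H, lt f g → lt (h * f) (h * g)) :
    positiveCone H lt ∈ conesOn (H : Set G) := by
  have lt_mul_of_one_lt {x y : H} (h : lt 1 y) : lt x (x * y) := by simpa using hinv 1 y x h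
  have one_lt_inv_of_lt_one {x : H} (h : lt x 1) : lt 1 x⁻¹ := by simpa using hinv x 1 x⁻¹ h
  refine ⟨fun a ha b hb => ?_, fun g hg => ?_, fun g hg => ?_, ?_⟩
  · lift a to H using ha
    lift b to H using hb
    simp only [← Subgroup.coe_mul, positiveCone_coe]
    exact fun ha hb => _root_.trans ha (lt_mul_of_one_lt hb)
  · lift g to H using hg
    simp only [← Subgroup.coe_inv, positiveCone_coe, OneMemClass.coe_eq_one]
    rcases trichotomous_of lt 1 g with h | h | h
    exacts [.inl h, .inr (.inr h.symm), .inr (.inl (one_lt_inv_of_lt_one h))]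
  · lift g to H using hg
    simp only [← Subgroup.coe_inv, ne_eq, positiveCone_coe]
    exact fun hg hg' =>
      irrefl_of lt 1 (_root_.trans hg (by simpa using lt_mul_of_one_lt (x := g) hg'))
  · rw [ne_eq, ← H.coe_one, positiveCone_coe]
    exact irrefl_of lt 1

lemma of_mem_conesOn_univ {P : G → Bool} (hP : P ∈ conesOn Set.univ) : LeftOrderable G := by
  obtain ⟨hmul, htotal, -, hone⟩ := hP
  refine ⟨fun g h => P (g⁻¹ * h) = true, ?_, fun f g h hfg => by simpa [mul_assoc] using hfg⟩
  refine
    { trichotomous := fun a b hab hba => ?_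
      irrefl := fun a => by simpa using hone
      trans := fun a b c hab hbc => by simpa [mul_assoc] using hmul _ trivial _ trivial hab hbc }
  rcases htotal (a⁻¹ * b) trivial with h | h | h
  exacts [absurd h hab, absurd (by simpa using h) hba, inv_mul_eq_one.mp h]

end LeftOrderable

/-- The set of positive cones of left-invariant total orders on `G` (as elements
of `2^G = G → Bool` with the product topology) is closed; consequently, if every
finitely generated subgroup of `G` is left-orderable, then so is `G`. -/
theorem stmt18 {G : Type*} [Group G] :
    IsClosed {P : G → Bool |
      (∀ a b : G, P a = true → P b = true → P (a * b) = true) ∧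
      (∀ g : G, P g = true ∨ P g⁻¹ = true ∨ g = 1) ∧
      (∀ g : G, P g = true → P g⁻¹ ≠ true) ∧ P 1 ≠ true} ∧
    ((∀ H : Subgroup G, H.FG → LeftOrderable H) → LeftOrderable G) := by
  refine ⟨by simpa [LeftOrderable.conesOn] using
    LeftOrderable.isClosed_conesOn (Set.univ : Set G), fun hfg => ?_⟩
  obtain ⟨P, hP⟩ := LeftOrderable.conesOn_univ_nonempty fun F : Finset G => by
    obtain ⟨lt, _, hinv⟩ := hfg (.closure F) ⟨F, rfl⟩
    exact ⟨_, LeftOrderable.conesOn_anti Subgroup.subset_closure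
      (LeftOrderable.positiveCone_mem_conesOn hinv)⟩
  exact LeftOrderable.of_mem_conesOn_univ hP
end
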